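/- If (a, b) is an interval parking function for n cars, then O(a) ≥_B O(b*)* in the Bruhat order on the symmetric group S_n. -/

import Mathlib

/-- `o` is the outcome of running parking Algorithm A on preference vector `a`:
car `i` parks in the first unoccupied spot in `[a i, n]`, and every car parks. -/
def IsAOutcome {n : ℕ} (a o : Fin n → Fin n) : Prop :=
  Function.Injective o ∧ ∀ i, a i ≤ o i ∧
    ∀ s, a i ≤ s → s < o i → ∃ j, j < i ∧ o j = s

/-- `a` is a parking function. -/
def IsParkingFunction {n : ℕ} (a : Fin n → Fin n) : Prop :=
  ∃ o, IsAOutcome a o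

/-- `o` is the outcome of running parking Algorithm B on the pair `(a, b)`:
car `i` parks in the first unoccupied spot in `[a i, b i]`, and every car parks. -/
def IsBOutcome {n : ℕ} (a b o : Fin n → Fin n) : Prop :=
  Function.Injective o ∧ ∀ i, a i ≤ o i ∧ o i ≤ b i ∧
    ∀ s, a i ≤ s → s < o i → ∃ j, j < i ∧ o j = s

/-- `(a, b)` is an interval parking function. -/
def IsIPF {n : ℕ} (a b : Fin n → Fin n) : Prop :=
  ∃ o, IsBOutcome a b o

/-- The conjugate (reverse complement) `x*` of `x`, with `x*(i) = n + 1 - x(n + 1 - i)`. -/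
def pconj {n : ℕ} (f : Fin n → Fin n) : Fin n → Fin n :=
  fun i => (f i.rev).rev

/-- The pair `(x, y)` is reachable, `x ⊵_R y`: there is an IPF `(a, b)` with
`O(a) = x` and `O(b*) = y*`. -/
def Reaches {n : ℕ} (x y : Fin n → Fin n) : Prop :=
  ∃ a b : Fin n → Fin n, IsIPF a b ∧ IsAOutcome a x ∧ IsAOutcome (pconj b) (pconj y)

/-- Pseudoreachability `x ≥_P y`: the reflexive-transitive closure of reachability. -/
def PseudoGE {n : ℕ} (x y : Equiv.Perm (Fin n)) : Prop :=
  Relation.ReflTransGen (fun u v : Equiv.Perm (Fin n) => Reaches ⇑u ⇑v) x y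

/-- `#{k ∈ [i] : x(k) ≥ j}` (with `i`, `j` zero-indexed). -/
def bcount {n : ℕ} (x : Fin n → Fin n) (i j : Fin n) : ℕ :=
  (Finset.univ.filter (fun k : Fin n => k ≤ i ∧ j ≤ x k)).card

/-- The Bruhat order `x ≥_B y` on the symmetric group. -/
def BruhatGE {n : ℕ} (x y : Equiv.Perm (Fin n)) : Prop :=
  ∀ i j : Fin n, bcount ⇑y i j ≤ bcount ⇑x i j

/-- The number of inversions (the Coxeter length) of `f`. -/
def invCount {n : ℕ} (f : Fin n → Fin n) : ℕ :=
  (Finset.univ.filter (fun p : Fin n × Fin n => p.1 < p.2 ∧ f p.2 < f p.1)).card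

/-- The adjacent transposition `s_i` exchanging `i` and `i+1` (one-indexed),
as a permutation of `Fin n`. -/
def sgen (n : ℕ) (i : ℕ) : Equiv.Perm (Fin n) :=
  if h : 1 ≤ i ∧ i < n then Equiv.swap ⟨i - 1, by omega⟩ ⟨i, h.2⟩ else 1

/-- Left weak order: `x ≥_W y` iff `x = s_{i₁} ⋯ s_{i_k} · y` with `ℓ(x) = ℓ(y) + k`. -/
def WeakGE {n : ℕ} (x y : Equiv.Perm (Fin n)) : Prop :=
  ∃ l : List ℕ, (∀ i ∈ l, 1 ≤ i ∧ i ≤ n - 1) ∧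
    x = (l.map (sgen n)).prod * y ∧ invCount ⇑x = invCount ⇑y + l.length

/-- The projection `x ↦ x̂` deleting the last position and the value `x(n)`. -/
def hatf {n : ℕ} (x : Fin (n + 1) → Fin (n + 1)) : Fin n → Fin n :=
  fun i =>
    if h : (x i.castSucc).val < (x (Fin.last n)).val
    then ⟨(x i.castSucc).val, by have h1 := (x (Fin.last n)).isLt; omega⟩
    else ⟨(x i.castSucc).val - 1, by have h1 := (x i.castSucc).isLt; have h2 := i.isLt; omega⟩

/-- `lam n f k` is `λ_k` of the permutation of `[n]` with one-line notation `f(1), …, f(n)`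
(one-indexed): `λ_{n-1}(x) = n - x(n)` and `λ_k(x) = λ_k(x̄)` for `k ≤ n - 2`, where
`x̄ ∈ S_{n-1}` is the restriction of `u⁻¹·x` (`u = s_{x(n)} ⋯ s_{n-1}`), concretely
`x̄(i) = x(i)` if `x(i) < x(n)` and `x̄(i) = x(i) - 1` if `x(i) > x(n)`. -/
def lam : ℕ → (ℕ → ℕ) → ℕ → ℕ
  | 0, _, _ => 0
  | n + 1, f, k =>
    if k = n then (n + 1) - f (n + 1)
    else lam n (fun i => if f i < f (n + 1) then f i else f i - 1) k

/-- The one-line notation of `x`, as a one-indexed function `ℕ → ℕ`. -/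
def oneline {n : ℕ} (x : Fin n → Fin n) : ℕ → ℕ :=
  fun i => if h : i - 1 < n then (x ⟨i - 1, h⟩).val + 1 else 0

/-- `y` contains the pattern `σ`. -/
def ContainsPattern {n m : ℕ} (y : Equiv.Perm (Fin n)) (σ : Equiv.Perm (Fin m)) : Prop :=
  ∃ f : Fin m → Fin n, StrictMono f ∧ ∀ j k, y (f j) < y (f k) ↔ σ j < σ k

/-- `x` is an AR (Arndt–Riehl) permutation: `x⁻¹(i) ≤ i + 1` for all `i ∈ [n]`. -/
def IsAR {n : ℕ} (x : Equiv.Perm (Fin n)) : Prop :=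
  ∀ i : Fin n, (x.symm i).val ≤ i.val + 1


/-
Conjugating, `y*` is the outcome of Algorithm A on `b*`, while `x*` is an injective assignment of
the cars respecting the preferences `b*`: the outcome of Algorithm B on `(a, b)` is also one of
Algorithm A on `a`, hence equals `x`, so `x ≤ b`. Algorithm A is greedy: among all injective assignments respecting
the preferences, it parks the largest number of the first `i` cars below any spot `s`. Conjugating
back, this count for `x*` and `y*` is the complement of the Bruhat count `#{k ≤ i : x(k) ≥ j}`
of `x` and `y`, which gives `x ≥_B y`.
-/

open Finset

theorem IsBOutcome.isAOutcome {n : ℕ} {a b o : Fin n → Fin n} (h : IsBOutcome a b o) :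
    IsAOutcome a o :=
  ⟨h.1, fun i => ⟨(h.2 i).1, (h.2 i).2.2⟩⟩

theorem IsAOutcome.unique {n : ℕ} {a o o' : Fin n → Fin n} (h : IsAOutcome a o)
    (h' : IsAOutcome a o') : o = o' := by
  funext k
  induction k using WellFoundedLT.induction with
  | _ k ih =>
    -- if one outcome parks car `k` earlier, that spot is taken by an earlier car in the other one
    have earlier {p q : Fin n → Fin n} (hp : IsAOutcome a p) (hq : IsAOutcome a q)
        (hpq : ∀ j < k, p j = q j) : ¬ p k < q k := fun hlt => by
      obtain ⟨j, hjk, hqj⟩ := (hq.2 k).2 (p k) (hp.2 k).1 hlt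
      exact hjk.ne (hp.1 ((hpq j hjk).trans hqj))
    exact le_antisymm (not_lt.1 (earlier h' h fun j hj => (ih j hj).symm))
      (not_lt.1 (earlier h h' ih))

section ParkedBelow

variable {n : ℕ}

def parkedBelow (f : Fin n → Fin n) (i s : ℕ) : ℕ :=
  #{k : Fin n | (k : ℕ) < i ∧ (f k : ℕ) < s}

theorem parkedBelow_succ (f : Fin n → Fin n) (i : Fin n) (s : ℕ) :
    parkedBelow f (i + 1) s = parkedBelow f i s + if (f i : ℕ) < s then 1 else 0 := by
  unfold parkedBelow
  split_ifs with hfi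
  on_goal 1 => rw [← card_insert_of_notMem (s := filter _ _) (a := i) (by simp)]
  on_goal 2 => rw [add_zero]
  all_goals
    congr 1
    ext k
    rcases eq_or_ne k i with rfl | hki
    · simp [hfi]
    · have := Fin.val_ne_iff.2 hki
      simp only [mem_filter, mem_univ, true_and, mem_insert, hki, false_or]
      omega

theorem parkedBelow_succ_of_le (f : Fin n → Fin n) {i : ℕ} (hi : n ≤ i) (s : ℕ) :
    parkedBelow f (i + 1) s = parkedBelow f i s := by
  unfold parkedBelow
  congr 1
  ext k
  simp only [mem_filter, mem_univ, true_and]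
  omega

theorem parkedBelow_eq_add_band (f : Fin n → Fin n) (i : ℕ) {c s : ℕ} (hcs : c ≤ s) :
    parkedBelow f i s =
      parkedBelow f i c + #{k : Fin n | (k : ℕ) < i ∧ c ≤ (f k : ℕ) ∧ (f k : ℕ) < s} := by
  unfold parkedBelow
  rw [← card_union_of_disjoint]
  · congr 1
    ext k
    simp only [mem_union, mem_filter, mem_univ, true_and]
    omega
  · rw [disjoint_filter]
    intro k _ h1 h2
    omega

theorem IsAOutcome.parkedBelow_le {c z π : Fin n → Fin n} (hz : IsAOutcome c z)
    (hπ : Function.Injective π) (hcπ : ∀ k, c k ≤ π k) (i s : ℕ) :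
    parkedBelow π i s ≤ parkedBelow z i s := by
  induction i generalizing s with
  | zero => simp [parkedBelow]
  | succ i ih =>
    rcases le_or_gt n i with hi | hi
    · rw [parkedBelow_succ_of_le π hi, parkedBelow_succ_of_le z hi]
      exact ih s
    obtain ⟨I, rfl⟩ : ∃ I : Fin n, (I : ℕ) = i := ⟨⟨i, hi⟩, rfl⟩
    rw [parkedBelow_succ, parkedBelow_succ]
    by_cases hzI : (z I : ℕ) < s
    · have := ih s
      split_ifs <;> omega
    rcases le_or_gt s (π I) with hπI | hπI
    · simpa [hzI, hπI.not_gt] using ih s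
    simp only [hzI, hπI, if_true, if_false, add_zero]
    have hcI : (c I : ℕ) ≤ π I := hcπ I
    -- under `z`, every spot of `[c I, s)` is taken by one of the first `I` cars
    have hband_z : s - c I ≤ #{k : Fin n | (k : ℕ) < I ∧ c I ≤ (z k : ℕ) ∧ (z k : ℕ) < s} :=
      calc s - c I = #(Ico (c I : ℕ) s) := (Nat.card_Ico _ _).symm
        _ ≤ _ := by
          refine card_le_card_of_surjOn (fun k => (z k : ℕ)) fun t ht => ?_
          simp only [coe_Ico, Set.mem_Ico] at ht
          obtain ⟨j, hj, hzj⟩ := (hz.2 I).2 ⟨t, by omega⟩ (Fin.le_def.2 ht.1)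
            (Fin.lt_def.2 (by simp; omega))
          refine ⟨j, ?_, by simp [hzj]⟩
          simp only [coe_filter, mem_univ, true_and, Set.mem_ofPred_eq, hzj]
          exact ⟨hj, ht⟩
    -- under `π`, car `I` itself takes one of them
    have hband_π : #{k : Fin n | (k : ℕ) < I ∧ c I ≤ (π k : ℕ) ∧ (π k : ℕ) < s} ≤ s - c I - 1 :=
      calc _ ≤ #((Ico (c I : ℕ) s).erase (π I)) := by
            refine card_le_card_of_injOn (fun k => (π k : ℕ)) (fun k hk => ?_)
              (fun k₁ _ k₂ _ h => hπ (Fin.val_injective h))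
            simp only [coe_filter, mem_univ, true_and, Set.mem_ofPred_eq] at hk
            simp only [coe_erase, coe_Ico, Set.mem_sdiff, Set.mem_Ico, Set.mem_singleton_iff,
              Fin.val_inj, hπ.eq_iff]
            exact ⟨⟨hk.2.1, hk.2.2⟩, Fin.ne_of_lt hk.1⟩
        _ = s - c I - 1 := by rw [card_erase_of_mem (mem_Ico.2 ⟨hcI, hπI⟩), Nat.card_Ico]
    have := ih (c I)
    rw [parkedBelow_eq_add_band π I (by omega : (c I : ℕ) ≤ s),
      parkedBelow_eq_add_band z I (by omega : (c I : ℕ) ≤ s)]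
    omega

theorem bcount_add_parkedBelow_pconj (x : Equiv.Perm (Fin n)) (i j : Fin n) :
    bcount ⇑x i j + parkedBelow (pconj ⇑x) (n - (i + 1)) (n - j) = n - j := by
  have hrev : parkedBelow (pconj ⇑x) (n - (i + 1)) (n - j) = #{k : Fin n | i < k ∧ j ≤ x k} := by
    unfold parkedBelow
    refine card_bij (fun k _ => k.rev) (fun k hk => ?_)
      (fun _ _ _ _ h => Fin.rev_injective h) (fun k hk => ⟨k.rev, ?_, k.rev_rev⟩)
    all_goals
      simp only [Finset.mem_filter, Finset.mem_univ, true_and] at hk ⊢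
      simp only [pconj, Fin.rev_rev, Fin.val_rev, Fin.lt_def, Fin.le_def] at hk ⊢
      omega
  have hge : #{k : Fin n | j ≤ x k} = n - j := by
    rw [← Fin.card_Ici j, ← card_map x.toEmbedding]
    congr 1
    ext k
    simp
  rw [hrev, ← hge, bcount, ← card_union_of_disjoint]
  · congr 1
    ext k
    simp only [mem_union, mem_filter, mem_univ, true_and]
    have := le_or_gt k i
    tauto
  · rw [disjoint_filter]
    intro k _ h1 h2
    exact absurd h1.1 (not_le.2 h2.1)

end ParkedBelow

/-- Theorem `thm:bruhat`. If `(a, b)` is an IPF, `x = O(a)` and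
`y = O(b*)*`, then `x ≥_B y` in Bruhat order. -/
theorem stmt4 {n : ℕ} (a b : Fin n → Fin n) (h : IsIPF a b) (x y : Equiv.Perm (Fin n))
    (hx : IsAOutcome a ⇑x) (hy : IsAOutcome (pconj b) (pconj ⇑y)) :
    BruhatGE x y := by
  obtain ⟨o, ho⟩ := h
  have hxb (k : Fin n) : x k ≤ b k := hx.unique ho.isAOutcome ▸ (ho.2 k).2.1
  have hgreedy := hy.parkedBelow_le (π := pconj ⇑x)
    (fun k₁ k₂ h => Fin.rev_injective (x.injective (Fin.rev_injective h)))
    fun k => Fin.rev_le_rev.2 (hxb k.rev)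
  intro i j
  have := hgreedy (n - (i + 1)) (n - j)
  have := bcount_add_parkedBelow_pconj x i j
  have := bcount_add_parkedBelow_pconj y i j
  omega
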